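/- Let G be a finite cyclic group with generator g and H = ⟨g²⟩, and let ρ, ρ' : G → ℂˣ be homomorphisms with |ρ(H)| = |ρ'(H)|. Set r = |ρ(G)|. Then exactly one of the following holds: |ρ'(G)| = r, or (|ρ'(G)| = 2r and r is odd), or (|ρ'(G)| = r/2 and r/2 is odd). -/

import Mathlib

/-!
The image of `⟨g⟩` under `ρ` is cyclic of order `r = orderOf (ρ g)`, and the image of `⟨g²⟩` is
generated by `ρ g ^ 2`, of order `r / gcd(r, 2)`. So the hypothesis says `r / gcd(r, 2) = s / gcd(s, 2)`
with `s = orderOf (ρ' g)`, and halving a number exactly when it is even loses only the information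
recovered by the three cases.
-/

lemma Nat.div_gcd_two (n : ℕ) : n / n.gcd 2 = if n % 2 = 0 then n / 2 else n := by
  rw [Nat.gcd_comm, Nat.gcd_rec]
  rcases Nat.mod_two_eq_zero_or_one n with h | h <;> simp [h]

lemma Nat.exactly_one_of_div_gcd_two_eq {r s : ℕ} (h : r / r.gcd 2 = s / s.gcd 2) :
    (s = r ∧ ¬(s = 2 * r ∧ Odd r) ∧ ¬(s = r / 2 ∧ Odd (r / 2))) ∨
    (s ≠ r ∧ (s = 2 * r ∧ Odd r) ∧ ¬(s = r / 2 ∧ Odd (r / 2))) ∨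
    (s ≠ r ∧ ¬(s = 2 * r ∧ Odd r) ∧ (s = r / 2 ∧ Odd (r / 2))) := by
  rw [Nat.div_gcd_two r, Nat.div_gcd_two s] at h
  simp only [Nat.odd_iff]
  split_ifs at h <;> omega

section

variable {G M : Type*} [Group G] [Group M]

lemma MonoidHom.card_range_eq_orderOf {g : G} (hg : ∀ x : G, x ∈ Subgroup.zpowers g)
    (f : G →* M) : Nat.card f.range = orderOf (f g) := by
  rw [f.range_eq_map, ← (Subgroup.eq_top_iff' _).mpr hg, MonoidHom.map_zpowers, Nat.card_zpowers]

lemma MonoidHom.card_map_zpowers_pow (f : G →* M) (g : G) {k : ℕ} (hk : k ≠ 0) :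
    Nat.card ((Subgroup.zpowers (g ^ k)).map f) = orderOf (f g) / (orderOf (f g)).gcd k := by
  rw [MonoidHom.map_zpowers, Nat.card_zpowers, map_pow, orderOf_pow' _ hk]

end

theorem card_image_trichotomy_general {G : Type*} [Group G]
    (g : G) (hg : ∀ x : G, x ∈ Subgroup.zpowers g) (rho rho' : G →* ℂˣ)
    (h : Nat.card (Subgroup.map rho (Subgroup.zpowers (g ^ 2))) =
         Nat.card (Subgroup.map rho' (Subgroup.zpowers (g ^ 2)))) :
    (Nat.card rho'.range = Nat.card rho.range ∧
      ¬(Nat.card rho'.range = 2 * Nat.card rho.range ∧ Odd (Nat.card rho.range)) ∧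
      ¬(Nat.card rho'.range = Nat.card rho.range / 2 ∧ Odd (Nat.card rho.range / 2))) ∨
    (Nat.card rho'.range ≠ Nat.card rho.range ∧
      (Nat.card rho'.range = 2 * Nat.card rho.range ∧ Odd (Nat.card rho.range)) ∧
      ¬(Nat.card rho'.range = Nat.card rho.range / 2 ∧ Odd (Nat.card rho.range / 2))) ∨
    (Nat.card rho'.range ≠ Nat.card rho.range ∧
      ¬(Nat.card rho'.range = 2 * Nat.card rho.range ∧ Odd (Nat.card rho.range)) ∧
      (Nat.card rho'.range = Nat.card rho.range / 2 ∧ Odd (Nat.card rho.range / 2))) := by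
  rw [rho.card_map_zpowers_pow g two_ne_zero, rho'.card_map_zpowers_pow g two_ne_zero] at h
  rw [rho.card_range_eq_orderOf hg, rho'.card_range_eq_orderOf hg]
  exact Nat.exactly_one_of_div_gcd_two_eq h

theorem card_image_trichotomy {G : Type*} [Group G] [Fintype G]
    (g : G) (hg : ∀ x : G, x ∈ Subgroup.zpowers g) (rho rho' : G →* ℂˣ)
    (h : Nat.card (Subgroup.map rho (Subgroup.zpowers (g ^ 2))) =
         Nat.card (Subgroup.map rho' (Subgroup.zpowers (g ^ 2)))) :
    (Nat.card rho'.range = Nat.card rho.range ∧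
      ¬(Nat.card rho'.range = 2 * Nat.card rho.range ∧ Odd (Nat.card rho.range)) ∧
      ¬(Nat.card rho'.range = Nat.card rho.range / 2 ∧ Odd (Nat.card rho.range / 2))) ∨
    (Nat.card rho'.range ≠ Nat.card rho.range ∧
      (Nat.card rho'.range = 2 * Nat.card rho.range ∧ Odd (Nat.card rho.range)) ∧
      ¬(Nat.card rho'.range = Nat.card rho.range / 2 ∧ Odd (Nat.card rho.range / 2))) ∨
    (Nat.card rho'.range ≠ Nat.card rho.range ∧
      ¬(Nat.card rho'.range = 2 * Nat.card rho.range ∧ Odd (Nat.card rho.range)) ∧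
      (Nat.card rho'.range = Nat.card rho.range / 2 ∧ Odd (Nat.card rho.range / 2))) :=
  card_image_trichotomy_general g hg rho rho' h
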